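/- Let γ(u) = (α(u), β(u)) be a regular C² curve in ℝ². Define σ(u) = (−α(u), −β(u), 1)/√(1 + α(u)² + β(u)²), a curve on the unit sphere S² ⊂ ℝ³. Then γ is regular with (signed) curvature of constant sign (everywhere positive, resp. everywhere negative) if and only if σ is a regular curve on S² with geodesic curvature of the corresponding constant sign (everywhere positive, resp. everywhere negative). -/

import Mathlib

/-!
Write `σ = f • p` with `p = (-α, -β, 1)` and `f = (1 + α² + β²)^(-1/2) > 0`. The triple
product `⟨σ'', σ × σ'⟩`, which carries the sign of the geodesic curvature, equals
`f³ ⟨p'', p × p'⟩ = f³ (α'β'' - β'α'')`, so it has the sign of the curvature of `γ`.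
Regularity of `σ` is automatic: the third coordinate of `σ'` is `f'`, and when it vanishes
`σ' = f p' = -f (α', β', 0) ≠ 0`.
-/

/-- Euclidean dot product on ℝ³ = ℝ × ℝ × ℝ. -/
def dot3 (a b : ℝ × ℝ × ℝ) : ℝ := a.1 * b.1 + a.2.1 * b.2.1 + a.2.2 * b.2.2

/-- Cross product on ℝ³ = ℝ × ℝ × ℝ. -/
def cross3 (a b : ℝ × ℝ × ℝ) : ℝ × ℝ × ℝ :=
  (a.2.1 * b.2.2 - a.2.2 * b.2.1, a.2.2 * b.1 - a.1 * b.2.2, a.1 * b.2.1 - a.2.1 * b.1)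

lemma ContDiff.differentiable_deriv_of_two {F : Type*} [NormedAddCommGroup F] [NormedSpace ℝ F]
    {f : ℝ → F} (hf : ContDiff ℝ 2 f) : Differentiable ℝ (deriv f) := by
  simpa using hf.differentiable_iteratedDeriv 1 (by norm_num)

lemma dot3_cross3_smul_expansion (f f' f'' : ℝ) (p p' p'' : ℝ × ℝ × ℝ) :
    dot3 (f • p'' + (2 * f') • p' + f'' • p) (cross3 (f • p) (f • p' + f' • p)) =
      f ^ 3 * dot3 p'' (cross3 p p') := by
  simp only [dot3, cross3, Prod.smul_fst, Prod.smul_snd, Prod.fst_add, Prod.snd_add,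
    smul_eq_mul]
  ring

lemma deriv_smul_eq {E : Type*} [NormedAddCommGroup E] [NormedSpace ℝ E] {f : ℝ → ℝ}
    {p : ℝ → E} (hf : Differentiable ℝ f) (hp : Differentiable ℝ p) :
    deriv (fun u => f u • p u) = fun u => f u • deriv p u + deriv f u • p u :=
  funext fun u => deriv_fun_smul (hf u) (hp u)

/-- Since `f p × (f p)' = f² (p × p')`, only the `f p''` term of `(f p)''` survives in the
triple product. -/
lemma dot3_deriv_deriv_cross3_smul {f : ℝ → ℝ} {p : ℝ → ℝ × ℝ × ℝ}
    (hf : ContDiff ℝ 2 f) (hp : ContDiff ℝ 2 p) (u : ℝ) :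
    dot3 (deriv (deriv fun u => f u • p u) u)
        (cross3 (f u • p u) (deriv (fun u => f u • p u) u)) =
      f u ^ 3 * dot3 (deriv (deriv p) u) (cross3 (p u) (deriv p u)) := by
  have hf1 := hf.differentiable two_ne_zero
  have hp1 := hp.differentiable two_ne_zero
  have hf2 := hf.differentiable_deriv_of_two
  have hp2 := hp.differentiable_deriv_of_two
  have hσ'' : deriv (deriv fun u => f u • p u) u =
      f u • deriv (deriv p) u + (2 * deriv f u) • deriv p u + deriv (deriv f) u • p u := by
    rw [deriv_smul_eq hf1 hp1,
      deriv_fun_add (f := fun u => f u • deriv p u) (g := fun u => deriv f u • p u)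
        ((hf1 u).smul (hp2 u)) ((hf2 u).smul (hp1 u)),
      deriv_fun_smul (hf1 u) (hp2 u), deriv_fun_smul (hf2 u) (hp1 u), two_mul, add_smul]
    abel
  rw [hσ'', deriv_smul_eq hf1 hp1, dot3_cross3_smul_expansion]

section Lift

variable {α β : ℝ → ℝ}

lemma hasDerivAt_lift {α' β' u : ℝ} (c : ℝ) (hα : HasDerivAt α α' u)
    (hβ : HasDerivAt β β' u) :
    HasDerivAt (fun u => ((-α u, -β u, c) : ℝ × ℝ × ℝ)) (-α', -β', 0) u :=
  hα.neg.prodMk (hβ.neg.prodMk (hasDerivAt_const u c))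

lemma deriv_lift (hα : Differentiable ℝ α) (hβ : Differentiable ℝ β) :
    deriv (fun u => ((-α u, -β u, 1) : ℝ × ℝ × ℝ)) =
      fun u => (-deriv α u, -deriv β u, 0) :=
  funext fun u => (hasDerivAt_lift _ (hα u).hasDerivAt (hβ u).hasDerivAt).deriv

lemma contDiff_lift (hα : ContDiff ℝ 2 α) (hβ : ContDiff ℝ 2 β) :
    ContDiff ℝ 2 fun u => ((-α u, -β u, 1) : ℝ × ℝ × ℝ) :=
  hα.neg.prodMk (hβ.neg.prodMk contDiff_const)

lemma dot3_deriv_deriv_cross3_lift (hα : ContDiff ℝ 2 α) (hβ : ContDiff ℝ 2 β) (u : ℝ) :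
    dot3 (deriv (deriv fun u => ((-α u, -β u, 1) : ℝ × ℝ × ℝ)) u)
        (cross3 (-α u, -β u, 1) (deriv (fun u => ((-α u, -β u, 1) : ℝ × ℝ × ℝ)) u)) =
      deriv α u * deriv (deriv β) u - deriv β u * deriv (deriv α) u := by
  have hα2 := hα.differentiable_deriv_of_two
  have hβ2 := hβ.differentiable_deriv_of_two
  rw [deriv_lift (hα.differentiable two_ne_zero) (hβ.differentiable two_ne_zero),
    (hasDerivAt_lift _ (hα2 u).hasDerivAt (hβ2 u).hasDerivAt).deriv]
  simp only [dot3, cross3]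
  ring

lemma deriv_smul_lift_ne_zero {f : ℝ → ℝ} (hf : Differentiable ℝ f)
    (hα : Differentiable ℝ α) (hβ : Differentiable ℝ β) {u : ℝ} (hfu : f u ≠ 0)
    (hreg : (deriv α u, deriv β u) ≠ (0, 0)) :
    deriv (fun u => f u • ((-α u, -β u, 1) : ℝ × ℝ × ℝ)) u ≠ 0 := by
  have hp : Differentiable ℝ fun u => ((-α u, -β u, 1) : ℝ × ℝ × ℝ) := fun u =>
    (hasDerivAt_lift _ (hα u).hasDerivAt (hβ u).hasDerivAt).differentiableAt
  rw [deriv_smul_eq hf hp, deriv_lift hα hβ]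
  intro h
  simp only [Prod.ext_iff, Prod.smul_fst, Prod.smul_snd, Prod.fst_add, Prod.snd_add,
    smul_eq_mul, Prod.fst_zero, Prod.snd_zero] at h
  obtain ⟨h1, h2, h3⟩ := h
  simp only [mul_zero, mul_one, zero_add] at h3
  simp only [h3, zero_mul, add_zero, neg_eq_zero, mul_eq_zero, hfu, false_or] at h1 h2
  exact hreg (by rw [h1, h2])

end Lift

lemma contDiff_inv_sqrt_one_add_sq_add_sq {α β : ℝ → ℝ} (hα : ContDiff ℝ 2 α)
    (hβ : ContDiff ℝ 2 β) : ContDiff ℝ 2 fun u => (Real.sqrt (1 + α u ^ 2 + β u ^ 2))⁻¹ := by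
  have hQ : ∀ u, 0 < 1 + α u ^ 2 + β u ^ 2 := fun u => by positivity
  exact (((contDiff_const.add (hα.pow 2)).add (hβ.pow 2)).sqrt fun u => (hQ u).ne').inv
    fun u => (Real.sqrt_pos.mpr (hQ u)).ne'

lemma sign_mul_of_pos {c x : ℝ} (hc : 0 < c) : (0 < c * x ↔ 0 < x) ∧ (c * x < 0 ↔ x < 0) :=
  ⟨mul_pos_iff_of_pos_left hc, by simpa using mul_pos_iff_of_pos_left hc (b := -x)⟩

/-- Let γ = (α,β) be a regular C² plane curve and
σ = (−α,−β,1)/√(1+α²+β²) the associated curve on S². Then γ has signed curvature of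
constant sign (the sign of α'β'' − β'α'') if and only if σ is regular with geodesic
curvature (sign of ⟨σ'', σ × σ'⟩) of the same constant sign. -/
theorem stmt13 (α β : ℝ → ℝ)
    (hα : ContDiff ℝ 2 α) (hβ : ContDiff ℝ 2 β)
    (hreg : ∀ u, (deriv α u, deriv β u) ≠ (0, 0))
    (σ : ℝ → ℝ × ℝ × ℝ)
    (hσ : ∀ u, σ u = (Real.sqrt (1 + (α u) ^ 2 + (β u) ^ 2))⁻¹ •
      ((-α u, -β u, 1) : ℝ × ℝ × ℝ)) :
    ((∀ u, 0 < deriv α u * deriv (deriv β) u - deriv β u * deriv (deriv α) u) ↔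
      ((∀ u, deriv σ u ≠ 0) ∧
        ∀ u, 0 < dot3 (deriv (deriv σ) u) (cross3 (σ u) (deriv σ u)))) ∧
    ((∀ u, deriv α u * deriv (deriv β) u - deriv β u * deriv (deriv α) u < 0) ↔
      ((∀ u, deriv σ u ≠ 0) ∧
        ∀ u, dot3 (deriv (deriv σ) u) (cross3 (σ u) (deriv σ u)) < 0)) := by
  set f := fun u => (Real.sqrt (1 + α u ^ 2 + β u ^ 2))⁻¹
  have hf : ContDiff ℝ 2 f := contDiff_inv_sqrt_one_add_sq_add_sq hα hβ
  have hf_pos : ∀ u, 0 < f u := fun u => by positivity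
  obtain rfl : σ = fun u => f u • ((-α u, -β u, 1) : ℝ × ℝ × ℝ) := funext hσ
  have hσ_reg : ∀ u, deriv (fun u => f u • ((-α u, -β u, 1) : ℝ × ℝ × ℝ)) u ≠ 0 :=
    fun u => deriv_smul_lift_ne_zero (hf.differentiable two_ne_zero) (hα.differentiable two_ne_zero)
      (hβ.differentiable two_ne_zero) (hf_pos u).ne' (hreg u)
  have hsign := fun u => sign_mul_of_pos (x := deriv α u * deriv (deriv β) u -
    deriv β u * deriv (deriv α) u) (pow_pos (hf_pos u) 3)
  simp only [dot3_deriv_deriv_cross3_smul hf (contDiff_lift hα hβ),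
    dot3_deriv_deriv_cross3_lift hα hβ, fun u => (hsign u).1, fun u => (hsign u).2]
  exact ⟨⟨fun h => ⟨hσ_reg, h⟩, And.right⟩, ⟨fun h => ⟨hσ_reg, h⟩, And.right⟩⟩
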